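/- arXiv:2106.13260 — 2 statements merged into one kernel-verified Lean document; each statement's English description precedes it below -/
import Mathlib

section
/- If the central quotient G/Z(G) of a group G has property R∞, then G has property R∞. -/
theorem Rinfty_of_central_quotient_Rinfty (G : Type*) [Group G]
    (hquot : ∀ ψ : (G ⧸ Subgroup.center G) ≃* (G ⧸ Subgroup.center G),
      Infinite (Quot (fun a b : G ⧸ Subgroup.center G => ∃ x, b = x * a * (ψ x)⁻¹))) :
    ∀ φ : G ≃* G, Infinite (Quot (fun g h : G => ∃ x : G, h = x * g * (φ x)⁻¹)) := by
  intro φ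
  have hmap : (Subgroup.center G).map φ.toMonoidHom = Subgroup.center G := by
    ext g
    constructor
    · rintro ⟨y, hy, rfl⟩
      simp only [SetLike.mem_coe, MulEquiv.coe_toMonoidHom, Subgroup.mem_center_iff] at hy ⊢
      intro z
      have := hy (φ.symm z)
      calc z * φ y = φ (φ.symm z * y) := by simp
        _ = φ (y * φ.symm z) := by rw [this]
        _ = φ y * z := by simp
    · intro hg
      refine ⟨φ.symm g, ?_, by simp⟩
      simp only [SetLike.mem_coe, Subgroup.mem_center_iff] at hg ⊢
      intro z
      have := hg (φ z)
      apply φ.injective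
      simpa using this
  let ψ := QuotientGroup.congr (Subgroup.center G) (Subgroup.center G) φ hmap
  have hψ : ∀ g : G, ψ (↑g) = ↑(φ g) := fun g => rfl
  haveI := hquot ψ
  apply Infinite.of_surjective
    (Quot.lift (fun g : G => Quot.mk (fun a b : G ⧸ Subgroup.center G => ∃ x, b = x * a * (ψ x)⁻¹) ↑g)
      (fun g h ⟨x, hx⟩ => Quot.sound ⟨↑x, by subst hx; push_cast [hψ]; rfl⟩))
  intro q
  induction q using Quot.ind with
  | _ a =>
    induction a using QuotientGroup.induction_on with
    | _ g => exact ⟨Quot.mk _ g, rfl⟩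
end

section
/- Let G be a group with trivial center and φ an automorphism of G whose class has infinite order in Out(G). In the semidirect product G ⋊_φ ℤ, two elements g, h ∈ G are φ-twisted conjugate in G if and only if the elements (g, 1) and (h, 1) are conjugate in G ⋊_φ ℤ. -/
lemma aux_pow_twisted (G : Type*) [Group G] (φ : MulAut G) (g : G) :
    ∀ k : ℤ, ∃ y : G, (φ ^ k) g = y * g * (φ y)⁻¹ := by
  intro k
  induction k using Int.induction_on with
  | zero => exact ⟨1, by simp⟩
  | succ k ih =>
    obtain ⟨y, hy⟩ := ih
    refine ⟨φ y * g⁻¹, ?_⟩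
    have : (φ ^ ((k : ℤ) + 1)) g = φ ((φ ^ (k : ℤ)) g) := by
      rw [add_comm, zpow_add, zpow_one]; rfl
    rw [this, hy]
    simp [map_mul, mul_assoc]
  | pred k ih =>
    obtain ⟨y, hy⟩ := ih
    refine ⟨φ⁻¹ y * φ⁻¹ g, ?_⟩
    have : (φ ^ (-(k : ℤ) - 1)) g = φ⁻¹ ((φ ^ (-(k:ℤ))) g) := by
      rw [sub_eq_add_neg, add_comm, zpow_add, zpow_neg_one]; rfl
    rw [this, hy]
    simp [map_mul, mul_assoc]

theorem twisted_conj_iff_conj_in_semidirect (G : Type*) [Group G]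
    (hZ : Subgroup.center G = ⊥) (φ : MulAut G)
    (hord : ∀ k : ℤ, k ≠ 0 → ¬ ∃ p : G, φ ^ k = MulAut.conj p)
    (g h : G) :
    (∃ x : G, h = x * g * (φ x)⁻¹) ↔
      IsConj
        (⟨g, Multiplicative.ofAdd 1⟩ :
          SemidirectProduct G (Multiplicative ℤ) (zpowersHom (MulAut G) φ))
        ⟨h, Multiplicative.ofAdd 1⟩ := by
  constructor
  · rintro ⟨x, rfl⟩
    rw [isConj_iff]
    refine ⟨⟨x, 1⟩, ?_⟩
    ext
    · simp [SemidirectProduct.mul_left, SemidirectProduct.inv_left, mul_assoc]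
    · simp [SemidirectProduct.mul_right, SemidirectProduct.inv_right]
  · rw [isConj_iff]
    rintro ⟨c, hc⟩
    have hl := congrArg SemidirectProduct.left hc
    simp [SemidirectProduct.mul_left, SemidirectProduct.inv_left,
      SemidirectProduct.mul_right, SemidirectProduct.inv_right] at hl
    set k := Multiplicative.toAdd c.right with hk
    have h2 : ∀ x : G, (φ ^ (k + 1)) ((φ ^ k)⁻¹ x) = φ x := by
      intro x
      have : (φ ^ (k + 1)) * (φ ^ k)⁻¹ = φ := by group
      calc (φ ^ (k + 1)) ((φ ^ k)⁻¹ x) = ((φ ^ (k + 1)) * (φ ^ k)⁻¹) x := rfl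
        _ = φ x := by rw [this]
    rw [show ∀ x : G, (MulEquiv.symm (φ ^ k)) x = (φ ^ k)⁻¹ x from fun _ => rfl, h2] at hl
    obtain ⟨y, hy⟩ := aux_pow_twisted G φ g k
    refine ⟨c.left * y, ?_⟩
    rw [← hl, hy]
    simp [map_mul, mul_assoc]
end
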